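/- Let E be a real inner product space, A : E → E a continuous linear map with adjoint A†, and let ξ₁, ξ₂ ∈ E be orthonormal vectors. For ε near 0, define ξ_{1,ε} = (ξ₁ + ε A ξ₁)/‖ξ₁ + ε A ξ₁‖ and ξ_{2,ε} = w(ε)/‖w(ε)‖ where w(ε) = (ξ₂ + ε A ξ₂) − ⟨ξ_{1,ε}, ξ₂ + ε A ξ₂⟩ ξ_{1,ε} (Gram–Schmidt orthogonalization against ξ_{1,ε}). Then ε ↦ ξ_{2,ε} is differentiable at ε = 0 with derivative A ξ₂ − ⟨ξ₂, A ξ₂⟩ ξ₂ − ⟨ξ₁, (A + A†) ξ₂⟩ ξ₁. -/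

import Mathlib

open scoped RealInnerProductSpace

/-!
Normalising a curve through a unit vector `e` keeps only the part of its velocity orthogonal
to `e`; this gives `dξ₁ = Aξ₁ - ⟪ξ₁, Aξ₁⟫ ξ₁`. Differentiating the Gram–Schmidt step at `ε = 0`,
where `ξ₁ ⊥ ξ₂`, subtracts `(⟪ξ₁, Aξ₂⟫ + ⟪dξ₁, ξ₂⟫) ξ₁ = ⟪ξ₁, (A + A†) ξ₂⟫ ξ₁` from `Aξ₂`, and the final
normalisation at the unit vector `ξ₂` removes the `ξ₂`-component.
-/

section

variable {E : Type*} [NormedAddCommGroup E] [InnerProductSpace ℝ E]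

theorem hasDerivAt_add_smul (x v : E) (t : ℝ) : HasDerivAt (fun ε : ℝ => x + ε • v) v t := by
  simpa using ((hasDerivAt_id t).smul_const v).const_add x

theorem HasDerivAt.inv_norm_smul_of_norm_eq_one {f : ℝ → E} {f' : E} {t : ℝ}
    (hf : HasDerivAt f f' t) (hft : ‖f t‖ = 1) :
    HasDerivAt (fun ε => ‖f ε‖⁻¹ • f ε) (f' - ⟪f t, f'⟫ • f t) t := by
  have hnorm : HasDerivAt (fun ε => ‖f ε‖) ⟪f t, f'⟫ t := by
    have := hf.norm_sq.sqrt (by simp [hft])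
    simp only [Real.sqrt_sq (norm_nonneg _)] at this
    convert this using 1
    simp [hft]
  exact ((hnorm.inv (by simp [hft])).smul hf).congr_deriv (by simp [hft, sub_eq_add_neg])

theorem hasDerivAt_inv_norm_smul_add_smul {x : E} (hx : ‖x‖ = 1) (v : E) :
    HasDerivAt (fun ε : ℝ => ‖x + ε • v‖⁻¹ • (x + ε • v)) (v - ⟪x, v⟫ • x) 0 := by
  simpa using (hasDerivAt_add_smul x v 0).inv_norm_smul_of_norm_eq_one (by simpa using hx)

theorem HasDerivAt.sub_inner_smul_of_inner_eq_zero {u y : ℝ → E} {u' y' : E} {t : ℝ}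
    (hu : HasDerivAt u u' t) (hy : HasDerivAt y y' t) (h : ⟪u t, y t⟫ = 0) :
    HasDerivAt (fun ε => y ε - ⟪u ε, y ε⟫ • u ε) (y' - (⟪u t, y'⟫ + ⟪u', y t⟫) • u t) t :=
  (hy.sub ((hu.inner ℝ hy).smul hu)).congr_deriv (by simp [h])

end

/-- Material derivative of the second tangent basis vector, obtained by a Gram–Schmidt
step against the perturbed first tangent vector: the derivative at `ε = 0` is
`A ξ₂ − ⟨ξ₂, A ξ₂⟩ ξ₂ − ⟨ξ₁, (A + A†) ξ₂⟩ ξ₁`. -/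
theorem material_derivative_of_second_tangent
    {E : Type*} [NormedAddCommGroup E] [InnerProductSpace ℝ E] [CompleteSpace E]
    (A : E →L[ℝ] E) (ξ₁ ξ₂ : E) (hξ₁ : ‖ξ₁‖ = 1) (hξ₂ : ‖ξ₂‖ = 1)
    (hortho : ⟪ξ₁, ξ₂⟫ = 0)
    (ξ1ε : ℝ → E) (hξ1ε : ξ1ε = fun ε : ℝ => ‖ξ₁ + ε • A ξ₁‖⁻¹ • (ξ₁ + ε • A ξ₁))
    (w : ℝ → E)
    (hw : w = fun ε : ℝ => (ξ₂ + ε • A ξ₂) - ⟪ξ1ε ε, ξ₂ + ε • A ξ₂⟫ • ξ1ε ε) :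
    HasDerivAt (fun ε : ℝ => ‖w ε‖⁻¹ • w ε)
      (A ξ₂ - ⟪ξ₂, A ξ₂⟫ • ξ₂ - ⟪ξ₁, (A + ContinuousLinearMap.adjoint A) ξ₂⟫ • ξ₁) 0 := by
  have hξ1ε' : HasDerivAt ξ1ε (A ξ₁ - ⟪ξ₁, A ξ₁⟫ • ξ₁) 0 :=
    hξ1ε ▸ hasDerivAt_inv_norm_smul_add_smul hξ₁ (A ξ₁)
  have hξ1ε0 : ξ1ε 0 = ξ₁ := by simp [hξ1ε, hξ₁]
  have hw' : HasDerivAt w (A ξ₂ - (⟪ξ₁, A ξ₂⟫ + ⟪A ξ₁, ξ₂⟫) • ξ₁) 0 := by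
    rw [hw]
    refine (hξ1ε'.sub_inner_smul_of_inner_eq_zero (hasDerivAt_add_smul ξ₂ (A ξ₂) 0)
      (by simp [hξ1ε0, hortho])).congr_deriv ?_
    simp [hξ1ε0, hortho, inner_sub_left, real_inner_smul_left]
  have hw0 : w 0 = ξ₂ := by simp [hw, hξ1ε0, hortho]
  have hcoeff : ⟪ξ₁, (A + ContinuousLinearMap.adjoint A) ξ₂⟫ = ⟪ξ₁, A ξ₂⟫ + ⟪A ξ₁, ξ₂⟫ := by
    simp [inner_add_right, ContinuousLinearMap.adjoint_inner_right]
  convert hw'.inv_norm_smul_of_norm_eq_one (by rw [hw0, hξ₂]) using 1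
  rw [hw0, hcoeff, inner_sub_right, real_inner_smul_right, real_inner_comm ξ₁ ξ₂, hortho]
  module
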